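/- arXiv:2007.03821 — 5 statements merged into one kernel-verified Lean document; each statement's English description precedes it below -/
import Mathlib

section
/- For all integers n and k with 2 ≤ k < n, the numbers f_{n,k} satisfy the recurrence f_{n,k} = Σ_{m=1}^{n−2} ( C(n−1, m) − 1 ) · f_{m, k−1}, where C(a,b) denotes the binomial coefficient. -/
open Finset

/-- The word of a permutation `σ` of `Fin n`: the letter at (0-based) position `i`,
viewed as a natural number (the letters are `0, 1, ..., n-1`, identified with the usual
letters `1, ..., n`); junk value `0` outside the range. -/
def entry {n : ℕ} (σ : Equiv.Perm (Fin n)) (i : ℕ) : ℕ :=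
  if h : i < n then (σ ⟨i, h⟩ : ℕ) else 0

/-- Position `i` starts a run of the word `w`: either `i = 0`, or there is a
descent at position `i - 1`. -/
def WordRunStart (w : ℕ → ℕ) (i : ℕ) : Prop :=
  i = 0 ∨ w i < w (i - 1)

instance (w : ℕ → ℕ) (i : ℕ) : Decidable (WordRunStart w i) :=
  inferInstanceAs (Decidable (i = 0 ∨ w i < w (i - 1)))

/-- The number of runs of the length-`m` word `w` (maximal consecutive increasing subwords). -/
def wordRuns (w : ℕ → ℕ) (m : ℕ) : ℕ :=
  ((Finset.range m).filter fun i => WordRunStart w i).card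

/-- The length-`m` word `w` is flattened: the first entries of its runs,
read from left to right, increase. -/
def WordFlattened (w : ℕ → ℕ) (m : ℕ) : Prop :=
  ∀ i < m, ∀ j < m, WordRunStart w i → WordRunStart w j → i < j → w i < w j

instance (w : ℕ → ℕ) (m : ℕ) : Decidable (WordFlattened w m) :=
  inferInstanceAs (Decidable (∀ i < m, ∀ j < m,
    WordRunStart w i → WordRunStart w j → i < j → w i < w j))

/-- Position `i` (0-based) starts a run of the permutation `σ`. -/
def IsRunStart {n : ℕ} (σ : Equiv.Perm (Fin n)) (i : ℕ) : Prop :=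
  i < n ∧ WordRunStart (entry σ) i

instance {n : ℕ} (σ : Equiv.Perm (Fin n)) (i : ℕ) : Decidable (IsRunStart σ i) :=
  inferInstanceAs (Decidable (i < n ∧ WordRunStart (entry σ) i))

/-- The number of runs of the permutation `σ`. -/
def runCount {n : ℕ} (σ : Equiv.Perm (Fin n)) : ℕ :=
  wordRuns (entry σ) n

/-- `σ` is a flattened partition. -/
def IsFlattened {n : ℕ} (σ : Equiv.Perm (Fin n)) : Prop :=
  WordFlattened (entry σ) n

instance {n : ℕ} (σ : Equiv.Perm (Fin n)) : Decidable (IsFlattened σ) :=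
  inferInstanceAs (Decidable (WordFlattened (entry σ) n))

/-- `flatSet n k`: the set `F_{n,k}` of flattened partitions over `[n]` with exactly `k` runs. -/
def flatSet (n k : ℕ) : Finset (Equiv.Perm (Fin n)) :=
  Finset.univ.filter fun σ => IsFlattened σ ∧ runCount σ = k

/-- `f n k = |F_{n,k}|`, the number of flattened partitions over `[n]` with exactly `k` runs. -/
def f (n k : ℕ) : ℕ := (flatSet n k).card

/-!
Cut a flattened partition `σ` with `k ≥ 2` runs after its first run. Since `σ` starts with its
smallest letter `1`, that run has length `r ≥ 2`; the rest of `σ` is a word on the set `S` of the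
remaining `m = n - r` letters, and its standardization `τ` is a flattened partition of `[m]` with
`k - 1` runs. Conversely, an `m`-subset `S` of `{2, …, n}` and a `τ ∈ F_{m,k-1}` glue back to
such a `σ` (the complement of `S` in increasing order, followed by `τ` relabelled onto `S`)
exactly when the junction is a descent, i.e. unless `S = {n - m + 1, …, n}`; this leaves
`C(n-1, m) - 1` choices of `S`.
-/

section Words

variable {v w : ℕ → ℕ} {n r i : ℕ}

lemma wordRunStart_congr (h : Set.EqOn v w (Set.Iio n)) (hi : i < n) :
    WordRunStart v i ↔ WordRunStart w i := by
  unfold WordRunStart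
  rcases Nat.eq_zero_or_pos i with rfl | hi0
  · simp
  · rw [h hi, h (show i - 1 < n by omega)]

lemma wordRuns_congr (h : Set.EqOn v w (Set.Iio n)) : wordRuns v n = wordRuns w n := by
  unfold wordRuns
  congr 1
  exact filter_congr fun i hi => wordRunStart_congr h (mem_range.1 hi)

lemma wordFlattened_congr (h : Set.EqOn v w (Set.Iio n)) :
    WordFlattened v n ↔ WordFlattened w n := by
  unfold WordFlattened
  refine forall₂_congr fun i hi => forall₂_congr fun j hj => ?_
  rw [wordRunStart_congr h hi, wordRunStart_congr h hj, h hi, h hj]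

section Relabel

variable {g : ℕ → ℕ} {s : Set ℕ}

lemma wordRunStart_comp_iff (hg : StrictMonoOn g s) (hv : Set.MapsTo v (Set.Iio n) s)
    (hi : i < n) : WordRunStart (g ∘ v) i ↔ WordRunStart v i := by
  unfold WordRunStart
  rcases Nat.eq_zero_or_pos i with rfl | hi0
  · simp
  · rw [Function.comp_apply, Function.comp_apply,
      hg.lt_iff_lt (hv hi) (hv (show i - 1 < n by omega))]

lemma wordRuns_comp (hg : StrictMonoOn g s) (hv : Set.MapsTo v (Set.Iio n) s) :
    wordRuns (g ∘ v) n = wordRuns v n := by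
  unfold wordRuns
  congr 1
  exact filter_congr fun i hi => wordRunStart_comp_iff hg hv (mem_range.1 hi)

lemma wordFlattened_comp_iff (hg : StrictMonoOn g s) (hv : Set.MapsTo v (Set.Iio n) s) :
    WordFlattened (g ∘ v) n ↔ WordFlattened v n := by
  unfold WordFlattened
  refine forall₂_congr fun i hi => forall₂_congr fun j hj => ?_
  rw [wordRunStart_comp_iff hg hv hi, wordRunStart_comp_iff hg hv hj, Function.comp_apply,
    Function.comp_apply, hg.lt_iff_lt (hv hi) (hv hj)]

end Relabel

def IsFirstRunLength (w : ℕ → ℕ) (r : ℕ) : Prop :=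
  0 < r ∧ StrictMonoOn w (Set.Iio r) ∧ WordRunStart w r

lemma not_wordRunStart_of_strictMonoOn (h : StrictMonoOn w (Set.Iio r)) (hi0 : 0 < i)
    (hir : i < r) : ¬ WordRunStart w i := by
  rintro (hi | hlt)
  · omega
  · exact (h (show i - 1 < r by omega) hir (by omega)).asymm hlt

namespace IsFirstRunLength

lemma wordRunStart_iff (h : IsFirstRunLength w r) :
    WordRunStart w i ↔ i = 0 ∨ ∃ j, i = r + j ∧ WordRunStart (fun j => w (r + j)) j := by
  obtain ⟨hr0, hmono, hstart⟩ := h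
  rcases lt_or_ge i r with hir | hri
  · rcases Nat.eq_zero_or_pos i with rfl | hi0
    · simp [WordRunStart]
    · simp only [not_wordRunStart_of_strictMonoOn hmono hi0 hir, false_iff]
      rintro (h | ⟨j, rfl, -⟩) <;> omega
  · obtain ⟨j, rfl⟩ := Nat.exists_eq_add_of_le hri
    rcases Nat.eq_zero_or_pos j with rfl | hj0
    · simpa [WordRunStart] using hstart
    · have : r + j - 1 = r + (j - 1) := by omega
      simp only [WordRunStart, this, add_right_inj, exists_eq_left']
      omega

lemma wordRunStart_add_iff (h : IsFirstRunLength w r) {j : ℕ} :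
    WordRunStart w (r + j) ↔ WordRunStart (fun j => w (r + j)) j := by
  rw [h.wordRunStart_iff]
  constructor
  · rintro (h0 | ⟨j', hj', hs⟩)
    · exact absurd h0 (by have := h.1; omega)
    · rwa [Nat.add_left_cancel hj']
  · exact fun hs => Or.inr ⟨j, rfl, hs⟩

lemma wordRuns_eq (h : IsFirstRunLength w r) (hrn : r ≤ n) :
    wordRuns w n = wordRuns (fun j => w (r + j)) (n - r) + 1 := by
  have hr0 := h.1
  have hset : (range n).filter (fun i => WordRunStart w i) =
      insert 0 (((range (n - r)).filter fun j => WordRunStart (fun j => w (r + j)) j).map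
        (addLeftEmbedding r)) := by
    ext i
    simp only [mem_filter, mem_range, mem_insert, mem_map, addLeftEmbedding_apply,
      h.wordRunStart_iff]
    constructor
    · rintro ⟨hi, rfl | ⟨j, rfl, hs⟩⟩
      · exact Or.inl rfl
      · exact Or.inr ⟨j, ⟨by omega, hs⟩, rfl⟩
    · rintro (rfl | ⟨j, ⟨hj, hs⟩, rfl⟩)
      · exact ⟨by omega, Or.inl rfl⟩
      · exact ⟨by omega, Or.inr ⟨j, rfl, hs⟩⟩
  unfold wordRuns
  rw [hset, card_insert_of_notMem (by simp; omega), card_map]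

lemma wordFlattened_iff (h : IsFirstRunLength w r) (hrn : r < n) :
    WordFlattened w n ↔ w 0 < w r ∧ WordFlattened (fun j => w (r + j)) (n - r) := by
  have ⟨hr0, _, hstart⟩ := h
  constructor
  · intro H
    refine ⟨H 0 (by omega) r hrn (Or.inl rfl) hstart hr0, fun a ha b hb hsa hsb hab => ?_⟩
    exact H (r + a) (by omega) (r + b) (by omega) (h.wordRunStart_add_iff.2 hsa)
      (h.wordRunStart_add_iff.2 hsb) (by omega)
  · rintro ⟨h0, H⟩ i hi j hj hsi hsj hij
    rw [h.wordRunStart_iff] at hsi hsj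
    obtain rfl | ⟨b, rfl, hsb⟩ := hsj
    · omega
    obtain rfl | ⟨a, rfl, hsa⟩ := hsi
    · rcases Nat.eq_zero_or_pos b with rfl | hb0
      · exact h0
      · exact h0.trans (H 0 (by omega) b (by omega) (Or.inl rfl) hsb hb0)
    · exact H a (by omega) b (by omega) hsa hsb (by omega)

lemma unique {r' : ℕ} (h : IsFirstRunLength w r) (h' : IsFirstRunLength w r') : r = r' := by
  by_contra hne
  rcases Nat.lt_or_gt_of_ne hne with hlt | hlt
  · exact not_wordRunStart_of_strictMonoOn h'.2.1 h.1 hlt h.2.2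
  · exact not_wordRunStart_of_strictMonoOn h.2.1 h'.1 hlt h'.2.2

lemma congr (h : IsFirstRunLength w r) (hvw : Set.EqOn v w (Set.Iio n)) (hrn : r < n) :
    IsFirstRunLength v r :=
  ⟨h.1, h.2.1.congr (hvw.symm.mono (Set.Iio_subset_Iio hrn.le)),
    (wordRunStart_congr hvw hrn).2 h.2.2⟩

end IsFirstRunLength

lemma strictMonoOn_of_not_wordRunStart (hinj : Set.InjOn w (Set.Iio r))
    (h : ∀ i, 0 < i → i < r → ¬ WordRunStart w i) : StrictMonoOn w (Set.Iio r) := by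
  have step : ∀ i, i + 1 < r → w i < w (i + 1) := fun i hi =>
    lt_of_le_of_ne (not_lt.1 fun hlt => h (i + 1) (by omega) hi (Or.inr hlt))
      fun heq => by have := hinj (show i < r by omega) hi heq; omega
  intro a _ b hb hab
  induction b, hab using Nat.le_induction with
  | base => exact step a hb
  | succ b hab ih => exact (ih (show b < r by simp at hb; omega)).trans (step b hb)

lemma exists_isFirstRunLength (hinj : Set.InjOn w (Set.Iio n)) (hruns : 2 ≤ wordRuns w n) :
    ∃ r < n, IsFirstRunLength w r := by
  have hex : ∃ r, 0 < r ∧ r < n ∧ WordRunStart w r := by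
    obtain ⟨a, ha, b, hb, hab⟩ := one_lt_card.1 (show 1 < wordRuns w n by omega)
    simp only [mem_filter, mem_range] at ha hb
    rcases Nat.eq_zero_or_pos a with rfl | ha0
    · exact ⟨b, by omega, hb⟩
    · exact ⟨a, ha0, ha⟩
  obtain ⟨hr0, hrn, hstart⟩ := Nat.find_spec hex
  refine ⟨Nat.find hex, hrn, hr0, strictMonoOn_of_not_wordRunStart
    (hinj.mono (Set.Iio_subset_Iio hrn.le)) fun i hi0 hir hs => ?_, hstart⟩
  exact Nat.find_min hex hir ⟨hi0, by omega, hs⟩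

end Words

noncomputable def nthSmallest (S : Finset ℕ) (j : ℕ) : ℕ :=
  if h : j < #S then S.orderEmbOfFin rfl ⟨j, h⟩ else 0

section NthSmallest

variable {S : Finset ℕ} {j x : ℕ}

lemma nthSmallest_mem (hj : j < #S) : nthSmallest S j ∈ S := by
  rw [nthSmallest, dif_pos hj]
  exact S.orderEmbOfFin_mem rfl _

lemma nthSmallest_strictMonoOn : StrictMonoOn (nthSmallest S) (Set.Iio #S) := by
  intro i (hi : i < #S) j (hj : j < #S) hij
  rw [nthSmallest, nthSmallest, dif_pos hi, dif_pos hj]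
  exact (S.orderEmbOfFin rfl).strictMono hij

lemma exists_nthSmallest_eq (hx : x ∈ S) : ∃ j < #S, nthSmallest S j = x := by
  obtain ⟨⟨j, hj⟩, rfl⟩ : x ∈ Set.range (S.orderEmbOfFin rfl) := by
    rwa [range_orderEmbOfFin]
  exact ⟨j, hj, dif_pos hj⟩

lemma nthSmallest_zero_le (hx : x ∈ S) : nthSmallest S 0 ≤ x := by
  obtain ⟨j, hj, rfl⟩ := exists_nthSmallest_eq hx
  exact nthSmallest_strictMonoOn.monotoneOn (show 0 < #S by omega) hj (Nat.zero_le j)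

lemma le_nthSmallest_card_sub_one (hx : x ∈ S) : x ≤ nthSmallest S (#S - 1) := by
  obtain ⟨j, hj, rfl⟩ := exists_nthSmallest_eq hx
  exact nthSmallest_strictMonoOn.monotoneOn hj (show #S - 1 < #S by omega) (by omega)

lemma eqOn_nthSmallest {g : ℕ → ℕ} (hg : StrictMonoOn g (Set.Iio #S))
    (hgS : Set.MapsTo g (Set.Iio #S) S) : Set.EqOn g (nthSmallest S) (Set.Iio #S) := by
  intro j (hj : j < #S)
  have := S.orderEmbOfFin_unique rfl (f := fun i => g i) (fun i => hgS i.isLt)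
    fun a b hab => hg a.isLt b.isLt hab
  rw [nthSmallest, dif_pos hj, ← this]

end NthSmallest

section Entry

variable {n : ℕ}

lemma entry_mapsTo (σ : Equiv.Perm (Fin n)) : Set.MapsTo (entry σ) (Set.Iio n) (Set.Iio n) :=
  fun i (hi : i < n) => by
    rw [Set.mem_Iio, entry, dif_pos hi]
    exact (σ _).isLt

lemma entry_injOn (σ : Equiv.Perm (Fin n)) : Set.InjOn (entry σ) (Set.Iio n) := by
  intro i (hi : i < n) j (hj : j < n) h
  rw [entry, entry, dif_pos hi, dif_pos hj] at h
  simpa using σ.injective (Fin.val_injective h)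

lemma eq_of_eqOn_entry {σ τ : Equiv.Perm (Fin n)}
    (h : Set.EqOn (entry σ) (entry τ) (Set.Iio n)) : σ = τ := by
  ext i
  simpa [entry, i.isLt] using h i.isLt

noncomputable def permOfWord (w : ℕ → ℕ) (hw : Set.MapsTo w (Set.Iio n) (Set.Iio n))
    (hinj : Set.InjOn w (Set.Iio n)) : Equiv.Perm (Fin n) :=
  Equiv.ofBijective (fun i => ⟨w i, hw i.isLt⟩) <| Finite.injective_iff_bijective.1
    fun i j h => Fin.ext (hinj i.isLt j.isLt (congrArg Fin.val h))

lemma entry_permOfWord {w : ℕ → ℕ} (hw : Set.MapsTo w (Set.Iio n) (Set.Iio n))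
    (hinj : Set.InjOn w (Set.Iio n)) : Set.EqOn (entry (permOfWord w hw hinj)) w (Set.Iio n) :=
  fun i hi => by simp [entry, permOfWord, Set.mem_Iio.1 hi]

lemma IsFlattened.entry_zero {σ : Equiv.Perm (Fin n)} (hσ : IsFlattened σ) (hn : 0 < n) :
    entry σ 0 = 0 := by
  set p : Fin n := σ.symm ⟨0, hn⟩
  have hp : entry σ p = 0 := by simp [entry, p]
  -- otherwise the position `p` of the letter `0` starts a run whose first letter is below `σ 0`
  by_contra h0
  have hp0 : (p : ℕ) ≠ 0 := fun h => h0 (h ▸ hp)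
  have hstart : WordRunStart (entry σ) p := Or.inr <| hp ▸ Nat.pos_of_ne_zero fun h =>
    absurd (entry_injOn σ (show (p : ℕ) - 1 < n by omega) p.isLt (h.trans hp.symm)) (by omega)
  have := hσ 0 hn p p.isLt (Or.inl rfl) hstart (Nat.pos_of_ne_zero hp0)
  omega

lemma exists_perm_eqOn_nthSmallest_comp {m : ℕ} {S : Finset ℕ} {v : ℕ → ℕ}
    (hv : Set.InjOn v (Set.Iio m)) (hvS : Set.MapsTo v (Set.Iio m) S) (hc : #S = m) :
    ∃ τ : Equiv.Perm (Fin m), Set.EqOn (nthSmallest S ∘ entry τ) v (Set.Iio m) := by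
  have hex : ∀ j ∈ Set.Iio m, ∃ a ∈ Set.Iio m, nthSmallest S a = v j := fun j hj => by
    obtain ⟨a, ha, h⟩ := exists_nthSmallest_eq (hvS hj)
    exact ⟨a, hc ▸ ha, h⟩
  set u : ℕ → ℕ := fun j => Function.invFunOn (nthSmallest S) (Set.Iio m) (v j)
  have hu : ∀ j ∈ Set.Iio m, nthSmallest S (u j) = v j := fun j hj =>
    Function.invFunOn_eq (hex j hj)
  have humaps : Set.MapsTo u (Set.Iio m) (Set.Iio m) := fun j hj =>
    Function.invFunOn_mem (hex j hj)
  have huinj : Set.InjOn u (Set.Iio m) := fun i hi j hj h =>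
    hv hi hj (by rw [← hu i hi, ← hu j hj, h])
  exact ⟨permOfWord u humaps huinj, fun j hj => by
    rw [Function.comp_apply, entry_permOfWord humaps huinj hj, hu j hj]⟩

end Entry

section Glue

variable {n m : ℕ} {S : Finset ℕ} {τ : Equiv.Perm (Fin m)} {i : ℕ}

noncomputable def glueWord (n : ℕ) (S : Finset ℕ) (τ : Equiv.Perm (Fin m)) (i : ℕ) : ℕ :=
  if i < n - m then nthSmallest (range n \ S) i else nthSmallest S (entry τ (i - (n - m)))

lemma glueWord_of_lt (hi : i < n - m) : glueWord n S τ i = nthSmallest (range n \ S) i :=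
  if_pos hi

lemma glueWord_shift : (fun j => glueWord n S τ (n - m + j)) = nthSmallest S ∘ entry τ :=
  funext fun j => by simp [glueWord]

lemma card_range_sdiff (hS : S ⊆ range n) (hc : #S = m) : #(range n \ S) = n - m := by
  rw [card_sdiff_of_subset hS, card_range, hc]

lemma glueWord_mem_sdiff (hS : S ⊆ range n) (hc : #S = m) (hi : i < n - m) :
    glueWord n S τ i ∈ range n \ S :=
  glueWord_of_lt hi ▸ nthSmallest_mem (card_range_sdiff hS hc ▸ hi)

lemma glueWord_add_mem (hc : #S = m) {j : ℕ} (hj : j < m) : glueWord n S τ (n - m + j) ∈ S :=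
  congrFun glueWord_shift j ▸ nthSmallest_mem (hc ▸ entry_mapsTo τ hj)

lemma glueWord_strictMonoOn (hS : S ⊆ range n) (hc : #S = m) :
    StrictMonoOn (glueWord n S τ) (Set.Iio (n - m)) :=
  (card_range_sdiff hS hc ▸ nthSmallest_strictMonoOn).congr fun _ hi => (glueWord_of_lt hi).symm

lemma glueWord_mapsTo (hS : S ⊆ range n) (hc : #S = m) :
    Set.MapsTo (glueWord n S τ) (Set.Iio n) (Set.Iio n) := by
  intro i (hi : i < n)
  rcases lt_or_ge i (n - m) with h | h
  · exact mem_range.1 (mem_sdiff.1 (glueWord_mem_sdiff hS hc h)).1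
  · obtain ⟨j, rfl⟩ := Nat.exists_eq_add_of_le h
    exact mem_range.1 (hS (glueWord_add_mem hc (by omega)))

lemma glueWord_injOn (hS : S ⊆ range n) (hc : #S = m) :
    Set.InjOn (glueWord n S τ) (Set.Iio n) := by
  have hC := card_range_sdiff hS hc
  intro i (hi : i < n) j (hj : j < n) h
  rcases lt_or_ge i (n - m) with hi' | hi' <;> rcases lt_or_ge j (n - m) with hj' | hj'
  · rw [glueWord_of_lt hi', glueWord_of_lt hj'] at h
    exact nthSmallest_strictMonoOn.injOn (hC ▸ hi') (hC ▸ hj') h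
  · obtain ⟨b, rfl⟩ := Nat.exists_eq_add_of_le hj'
    exact absurd (h ▸ glueWord_add_mem hc (by omega))
      (mem_sdiff.1 (glueWord_mem_sdiff hS hc hi')).2
  · obtain ⟨a, rfl⟩ := Nat.exists_eq_add_of_le hi'
    exact absurd (h ▸ glueWord_add_mem hc (by omega))
      (mem_sdiff.1 (glueWord_mem_sdiff hS hc hj')).2
  · obtain ⟨a, rfl⟩ := Nat.exists_eq_add_of_le hi'
    obtain ⟨b, rfl⟩ := Nat.exists_eq_add_of_le hj'
    have ha : a < m := by omega
    have hb : b < m := by omega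
    rw [congrFun glueWord_shift, congrFun glueWord_shift] at h
    have := entry_injOn τ ha hb <| nthSmallest_strictMonoOn.injOn (hc ▸ entry_mapsTo τ ha)
      (hc ▸ entry_mapsTo τ hb) h
    rw [this]

noncomputable def gluePerm (hS : S ⊆ range n) (hc : #S = m) (τ : Equiv.Perm (Fin m)) :
    Equiv.Perm (Fin n) :=
  permOfWord (glueWord n S τ) (glueWord_mapsTo hS hc) (glueWord_injOn hS hc)

lemma entry_gluePerm (hS : S ⊆ range n) (hc : #S = m) :
    Set.EqOn (entry (gluePerm hS hc τ)) (glueWord n S τ) (Set.Iio n) :=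
  entry_permOfWord _ _

lemma isFirstRunLength_glueWord_iff (hS : S ⊆ range n) (hc : #S = m) (hm : 0 < m)
    (hmn : m < n) (hτ : entry τ 0 = 0) :
    IsFirstRunLength (glueWord n S τ) (n - m) ↔ S ≠ Ico (n - m) n := by
  have hC := card_range_sdiff hS hc
  have hfirst : glueWord n S τ (n - m) = nthSmallest S 0 := by
    simpa [hτ] using congrFun (glueWord_shift (n := n) (S := S) (τ := τ)) 0
  have hlast : glueWord n S τ (n - m - 1) = nthSmallest (range n \ S) (#(range n \ S) - 1) := by
    rw [glueWord_of_lt (by omega), hC]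
  have hlast_mem : glueWord n S τ (n - m - 1) ∈ range n \ S :=
    glueWord_mem_sdiff hS hc (by omega)
  have hIco : #(Ico (n - m) n) = #S := by rw [Nat.card_Ico, hc]; omega
  simp only [IsFirstRunLength, show 0 < n - m by omega, glueWord_strictMonoOn hS hc, true_and,
    WordRunStart, show n - m ≠ 0 by omega, false_or, hfirst]
  constructor
  · rintro hlt rfl
    have h1 := mem_Ico.1 (nthSmallest_mem (S := Ico (n - m) n) (j := 0) (by omega))
    rw [mem_sdiff, mem_range, mem_Ico] at hlast_mem
    omega
  · intro hne
    obtain ⟨x, hxS, hx⟩ := not_subset.1 fun hsub => hne (eq_of_subset_of_card_le hsub hIco.le)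
    obtain ⟨y, hy, hyS⟩ := not_subset.1 fun hsub =>
      hne (eq_of_subset_of_card_le hsub hIco.ge).symm
    have hyC : y ∈ range n \ S := mem_sdiff.2 ⟨mem_range.2 (mem_Ico.1 hy).2, hyS⟩
    have hxn := mem_range.1 (hS hxS)
    rw [mem_Ico] at hx hy
    rw [hlast]
    calc nthSmallest S 0 ≤ x := nthSmallest_zero_le hxS
      _ < y := by omega
      _ ≤ _ := le_nthSmallest_card_sub_one hyC

lemma runCount_gluePerm (hS : S ⊆ range n) (hc : #S = m)
    (h : IsFirstRunLength (glueWord n S τ) (n - m)) :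
    runCount (gluePerm hS hc τ) = runCount τ + 1 := by
  have hmn : m ≤ n := hc ▸ card_range n ▸ card_le_card hS
  rw [runCount, wordRuns_congr (entry_gluePerm hS hc), h.wordRuns_eq (Nat.sub_le n m),
    glueWord_shift, Nat.sub_sub_self hmn,
    wordRuns_comp nthSmallest_strictMonoOn (hc ▸ entry_mapsTo τ), runCount]

lemma isFlattened_gluePerm_iff (hS : S ⊆ range n) (hc : #S = m) (hm : 0 < m) (h0 : 0 ∉ S)
    (h : IsFirstRunLength (glueWord n S τ) (n - m)) :
    IsFlattened (gluePerm hS hc τ) ↔ IsFlattened τ := by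
  have hmn : m ≤ n := hc ▸ card_range n ▸ card_le_card hS
  have hpos : 0 < glueWord n S τ (n - m) := Nat.pos_of_ne_zero fun h' =>
    h0 (h' ▸ by simpa using glueWord_add_mem (n := n) (τ := τ) hc hm)
  have hzero : glueWord n S τ 0 = 0 := by
    have h0C : 0 ∈ range n \ S := mem_sdiff.2 ⟨mem_range.2 (by omega), h0⟩
    rw [glueWord_of_lt h.1]
    exact Nat.le_zero.1 (nthSmallest_zero_le h0C)
  rw [IsFlattened, wordFlattened_congr (entry_gluePerm hS hc), h.wordFlattened_iff (by omega),
    glueWord_shift, Nat.sub_sub_self hmn,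
    wordFlattened_comp_iff nthSmallest_strictMonoOn (hc ▸ entry_mapsTo τ), hzero]
  exact and_iff_right hpos

end Glue

section Decomposition

variable {n m : ℕ}

lemma card_image_Ico_of_injOn {w : ℕ → ℕ} (hinj : Set.InjOn w (Set.Iio n)) (hmn : m ≤ n) :
    #((Ico (n - m) n).image w) = m := by
  rw [card_image_of_injOn (hinj.mono fun i hi => (mem_Ico.1 hi).2), Nat.card_Ico]
  omega

lemma image_Ico_glueWord {S : Finset ℕ} {τ : Equiv.Perm (Fin m)} (hS : S ⊆ range n)
    (hc : #S = m) : (Ico (n - m) n).image (glueWord n S τ) = S := by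
  have hmn : m ≤ n := hc ▸ card_range n ▸ card_le_card hS
  refine eq_of_subset_of_card_le (fun x hx => ?_)
    (by rw [card_image_Ico_of_injOn (glueWord_injOn hS hc) hmn, hc])
  obtain ⟨i, hi, rfl⟩ := mem_image.1 hx
  obtain ⟨j, rfl⟩ := Nat.exists_eq_add_of_le (mem_Ico.1 hi).1
  exact glueWord_add_mem hc (by have := (mem_Ico.1 hi).2; omega)

lemma gluePerm_inj {m₁ m₂ : ℕ} {S₁ S₂ : Finset ℕ} {τ₁ : Equiv.Perm (Fin m₁)}
    {τ₂ : Equiv.Perm (Fin m₂)} (hS₁ : S₁ ⊆ range n) (hc₁ : #S₁ = m₁) (hS₂ : S₂ ⊆ range n)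
    (hc₂ : #S₂ = m₂) (h₁ : IsFirstRunLength (glueWord n S₁ τ₁) (n - m₁))
    (h₂ : IsFirstRunLength (glueWord n S₂ τ₂) (n - m₂)) (hm₂ : 0 < m₂)
    (h : gluePerm hS₁ hc₁ τ₁ = gluePerm hS₂ hc₂ τ₂) :
    (⟨m₁, S₁, τ₁⟩ : (m : ℕ) × Finset ℕ × Equiv.Perm (Fin m)) = ⟨m₂, S₂, τ₂⟩ := by
  have hw : Set.EqOn (glueWord n S₁ τ₁) (glueWord n S₂ τ₂) (Set.Iio n) :=
    (entry_gluePerm hS₁ hc₁).symm.trans (h ▸ entry_gluePerm hS₂ hc₂)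
  have hmn₁ : m₁ ≤ n := hc₁ ▸ card_range n ▸ card_le_card hS₁
  have hmn₂ : m₂ ≤ n := hc₂ ▸ card_range n ▸ card_le_card hS₂
  have hr := h₁.unique (h₂.congr hw (by omega))
  obtain rfl : m₁ = m₂ := by omega
  obtain rfl : S₁ = S₂ := by
    rw [← image_Ico_glueWord (τ := τ₁) hS₁ hc₁, ← image_Ico_glueWord (τ := τ₂) hS₂ hc₂]
    exact image_congr (hw.mono fun i hi => (mem_Ico.1 hi).2)
  obtain rfl : τ₁ = τ₂ := eq_of_eqOn_entry fun j (hj : j < m₁) => by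
    have := hw (show n - m₁ + j < n by omega)
    rw [congrFun glueWord_shift, congrFun glueWord_shift] at this
    exact nthSmallest_strictMonoOn.injOn (hc₁ ▸ entry_mapsTo τ₁ hj) (hc₁ ▸ entry_mapsTo τ₂ hj)
      this
  rfl

lemma eqOn_glueWord {w : ℕ → ℕ} {S : Finset ℕ} {τ : Equiv.Perm (Fin m)}
    (hw : Set.MapsTo w (Set.Iio n) (Set.Iio n)) (hinj : Set.InjOn w (Set.Iio n)) (hmn : m ≤ n)
    (hmono : StrictMonoOn w (Set.Iio (n - m))) (hS : S = (Ico (n - m) n).image w)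
    (hτ : Set.EqOn (nthSmallest S ∘ entry τ) (fun j => w (n - m + j)) (Set.Iio m)) :
    Set.EqOn w (glueWord n S τ) (Set.Iio n) := by
  have hSr : S ⊆ range n :=
    hS ▸ image_subset_iff.2 fun i hi => mem_range.2 (hw (mem_Ico.1 hi).2)
  have hC := card_range_sdiff hSr (hS ▸ card_image_Ico_of_injOn hinj hmn)
  intro i (hi : i < n)
  rcases lt_or_ge i (n - m) with h | h
  · rw [glueWord_of_lt h]
    refine eqOn_nthSmallest (hC ▸ hmono) (fun j (hj : j < #(range n \ S)) => ?_) (hC ▸ h)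
    rw [hC] at hj
    rw [mem_coe, mem_sdiff, mem_range, hS, mem_image]
    refine ⟨hw (show j < n by omega), fun ⟨i', hi', he⟩ => ?_⟩
    have := hinj (mem_Ico.1 hi').2 (show j < n by omega) he
    have := (mem_Ico.1 hi').1
    omega
  · obtain ⟨j, rfl⟩ := Nat.exists_eq_add_of_le h
    rw [congrFun glueWord_shift]
    exact (hτ (show j < m by omega)).symm

lemma exists_gluePerm_eq {σ : Equiv.Perm (Fin n)} (hσ : IsFlattened σ)
    (hruns : 2 ≤ runCount σ) :
    ∃ (m : ℕ) (S : Finset ℕ) (τ : Equiv.Perm (Fin m)) (hS : S ⊆ range n) (hc : #S = m),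
      0 < m ∧ m + 2 ≤ n ∧ 0 ∉ S ∧ IsFirstRunLength (glueWord n S τ) (n - m) ∧
      gluePerm hS hc τ = σ := by
  obtain ⟨r, hrn, hfirst⟩ := exists_isFirstRunLength (entry_injOn σ) hruns
  have h0 := hσ.entry_zero (by omega)
  obtain ⟨m, hmn, rfl⟩ : ∃ m, m ≤ n ∧ r = n - m := ⟨n - r, by omega, by omega⟩
  have hr2 : 2 ≤ n - m := by
    obtain ⟨hr0, -, hs | hs⟩ := hfirst
    · omega
    · by_contra
      rw [show n - m - 1 = 0 by omega, h0] at hs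
      omega
  set S := (Ico (n - m) n).image (entry σ) with hSdef
  have hc : #S = m := card_image_Ico_of_injOn (entry_injOn σ) hmn
  have hSr : S ⊆ range n := image_subset_iff.2 fun i hi =>
    mem_range.2 (entry_mapsTo σ (mem_Ico.1 hi).2)
  obtain ⟨τ, hτ⟩ := exists_perm_eqOn_nthSmallest_comp (v := fun j => entry σ (n - m + j))
    (fun i (hi : i < m) j (hj : j < m) h => by
      have := entry_injOn σ (show n - m + i < n by omega) (show n - m + j < n by omega) h
      omega)
    (fun j (hj : j < m) => mem_image.2 ⟨n - m + j, mem_Ico.2 ⟨by omega, by omega⟩, rfl⟩) hc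
  have heq := eqOn_glueWord (entry_mapsTo σ) (entry_injOn σ) hmn hfirst.2.1 hSdef hτ
  refine ⟨m, S, τ, hSr, hc, by omega, by omega, fun h => ?_, hfirst.congr heq.symm (by omega),
    eq_of_eqOn_entry ((entry_gluePerm hSr hc).trans heq.symm)⟩
  obtain ⟨i, hi, he⟩ := mem_image.1 h
  have := entry_injOn σ (mem_Ico.1 hi).2 (show 0 < n by omega) (he.trans h0.symm)
  have := (mem_Ico.1 hi).1
  omega

end Decomposition

section Counting

/-- Letters are `0`-based: `Ioo 0 n` stands for `{2, …, n}` and `Ico (n - m) n` for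
`{n - m + 1, …, n}`. -/
def glueData (n k : ℕ) : Finset ((m : ℕ) × Finset ℕ × Equiv.Perm (Fin m)) :=
  (Icc 1 (n - 2)).sigma fun m =>
    ((powersetCard m (Ioo 0 n)).erase (Ico (n - m) n)) ×ˢ flatSet m (k - 1)

variable {n k m : ℕ} {S : Finset ℕ} {τ : Equiv.Perm (Fin m)}

lemma mem_glueData : ⟨m, S, τ⟩ ∈ glueData n k ↔ (1 ≤ m ∧ m ≤ n - 2) ∧
    (S ≠ Ico (n - m) n ∧ S ⊆ Ioo 0 n ∧ #S = m) ∧ IsFlattened τ ∧ runCount τ = k - 1 := by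
  simp [glueData, flatSet]

lemma card_glueData (n k : ℕ) :
    #(glueData n k) = ∑ m ∈ Icc 1 (n - 2), (Nat.choose (n - 1) m - 1) * f m (k - 1) := by
  rw [glueData, card_sigma]
  refine sum_congr rfl fun m hm => ?_
  have hm := mem_Icc.1 hm
  have htop : Ico (n - m) n ∈ powersetCard m (Ioo 0 n) :=
    mem_powersetCard.2 ⟨fun _ hx => by simp at hx ⊢; omega, by simp; omega⟩
  rw [card_product, card_erase_of_mem htop, card_powersetCard, Nat.card_Ioo, f, Nat.sub_zero]

lemma subset_range_of_mem_glueData {a : (m : ℕ) × Finset ℕ × Equiv.Perm (Fin m)}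
    (ha : a ∈ glueData n k) : a.2.1 ⊆ range n :=
  (mem_powersetCard.1 (mem_of_mem_erase (mem_product.1 (mem_sigma.1 ha).2).1)).1.trans
    fun _ hx => mem_range.2 (mem_Ioo.1 hx).2

lemma card_of_mem_glueData {a : (m : ℕ) × Finset ℕ × Equiv.Perm (Fin m)}
    (ha : a ∈ glueData n k) : #a.2.1 = a.1 :=
  (mem_powersetCard.1 (mem_of_mem_erase (mem_product.1 (mem_sigma.1 ha).2).1)).2

lemma isFirstRunLength_of_mem_glueData (ha : ⟨m, S, τ⟩ ∈ glueData n k) :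
    IsFirstRunLength (glueWord n S τ) (n - m) := by
  obtain ⟨hm, ⟨hne, -, hc⟩, hτ, -⟩ := mem_glueData.1 ha
  exact (isFirstRunLength_glueWord_iff (subset_range_of_mem_glueData ha) hc (by omega)
    (by omega) (hτ.entry_zero (by omega))).2 hne

lemma gluePerm_mem_flatSet (hk : 1 ≤ k) (ha : ⟨m, S, τ⟩ ∈ glueData n k) :
    gluePerm (subset_range_of_mem_glueData ha) (card_of_mem_glueData ha) τ ∈ flatSet n k := by
  obtain ⟨hm, ⟨-, hS, -⟩, hτ, hruns⟩ := mem_glueData.1 ha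
  have hfirst := isFirstRunLength_of_mem_glueData ha
  simp only [flatSet, mem_filter, mem_univ, true_and]
  refine ⟨(isFlattened_gluePerm_iff _ _ (by omega) (fun h => ?_) hfirst).2 hτ, ?_⟩
  · simpa using hS h
  · rw [runCount_gluePerm _ _ hfirst, hruns]
    omega

lemma exists_mem_glueData_gluePerm_eq (hk : 2 ≤ k) {σ : Equiv.Perm (Fin n)}
    (hσ : σ ∈ flatSet n k) :
    ∃ (a : (m : ℕ) × Finset ℕ × Equiv.Perm (Fin m)) (ha : a ∈ glueData n k),
      gluePerm (subset_range_of_mem_glueData ha) (card_of_mem_glueData ha) a.2.2 = σ := by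
  simp only [flatSet, mem_filter, mem_univ, true_and] at hσ
  obtain ⟨m, S, τ, hS, hc, hm, hmn, h0, hfirst, rfl⟩ := exists_gluePerm_eq hσ.1 (by omega)
  have hτ := (isFlattened_gluePerm_iff hS hc hm h0 hfirst).1 hσ.1
  have hruns := runCount_gluePerm hS hc hfirst
  refine ⟨⟨m, S, τ⟩, mem_glueData.2 ⟨⟨hm, by omega⟩, ⟨?_, ?_, hc⟩, hτ, by omega⟩, rfl⟩
  · exact (isFirstRunLength_glueWord_iff hS hc hm (by omega) (hτ.entry_zero hm)).1 hfirst
  · exact fun x hx =>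
      mem_Ioo.2 ⟨Nat.pos_of_ne_zero fun h => h0 (h ▸ hx), mem_range.1 (hS hx)⟩

end Counting

theorem f_recurrence_choose_general (n k : ℕ) (hk : 2 ≤ k) :
    f n k = ∑ m ∈ Finset.Icc 1 (n - 2), (Nat.choose (n - 1) m - 1) * f m (k - 1) := by
  rw [← card_glueData, f]
  refine (card_bij (fun a ha =>
    gluePerm (subset_range_of_mem_glueData ha) (card_of_mem_glueData ha) a.2.2) ?_ ?_ ?_).symm
  · rintro ⟨m, S, τ⟩ ha
    exact gluePerm_mem_flatSet (by omega) ha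
  · rintro ⟨m₁, S₁, τ₁⟩ ha₁ ⟨m₂, S₂, τ₂⟩ ha₂ h
    exact gluePerm_inj _ _ _ _ (isFirstRunLength_of_mem_glueData ha₁)
      (isFirstRunLength_of_mem_glueData ha₂) (by have := (mem_glueData.1 ha₂).1; omega) h
  · intro σ hσ
    exact exists_mem_glueData_gluePerm_eq hk hσ

/-- For all integers `n`, `k` with `2 ≤ k < n`, the numbers `f_{n,k}` satisfy
`f_{n,k} = Σ_{m=1}^{n-2} (C(n-1, m) - 1) ⬝ f_{m,k-1}`. -/
theorem f_recurrence_choose (n k : ℕ) (hk : 2 ≤ k) (hkn : k < n) :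
    f n k = ∑ m ∈ Finset.Icc 1 (n - 2), (Nat.choose (n - 1) m - 1) * f m (k - 1) :=
  f_recurrence_choose_general n k hk
end

section
/- For every integer n ≥ 2, the maximal number of runs satisfies a_n = a_{n−2} + 1, where a_0 = 0 and a_1 = 1. -/
/-!
In a flattened word two adjacent positions `i, i + 1` cannot both start runs: that would force
`w (i + 1) < w i` (a descent) and `w i < w (i + 1)` (increasing run heads). So the run starts
form a set of pairwise non-adjacent positions in `[0, n)`, which has at most `⌈n / 2⌉ = (n + 1) / 2`
elements. The zigzag word `0, h, 1, h + 1, 2, …` with `h = (n + 1) / 2` is flattened and starts a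
run at every even position, so it attains the bound. Hence `a n = (n + 1) / 2`.
-/

open Finset

/-- `a n`: the maximal number of runs of a flattened partition over `[n]` (with `a 0 = 0`,
since the empty permutation has no runs). -/
def a (n : ℕ) : ℕ :=
  (Finset.univ.filter fun σ : Equiv.Perm (Fin n) => IsFlattened σ).sup runCount


lemma card_le_of_forall_add_one_notMem {s : Finset ℕ} {m : ℕ} (hs : s ⊆ range m)
    (h : ∀ i ∈ s, i + 1 ∉ s) : #s ≤ (m + 1) / 2 := by
  have hinj : Set.InjOn (· / 2) s := by
    intro i hi j hj hij
    simp only at hij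
    by_contra hne
    rcases Nat.lt_or_gt_of_ne hne with hlt | hlt
    · exact h i hi (by rwa [show i + 1 = j by omega])
    · exact h j hj (by rwa [show j + 1 = i by omega])
  have hmaps : Set.MapsTo (· / 2) s (range ((m + 1) / 2)) := by
    intro i hi
    have := mem_range.mp (hs hi)
    simp only [coe_range, Set.mem_Iio]
    omega
  simpa using card_le_card_of_injOn _ hmaps hinj

lemma card_filter_range_mod_two_eq_zero (n : ℕ) : #{i ∈ range n | i % 2 = 0} = (n + 1) / 2 := by
  have := Nat.count_modEq_card n two_pos 0
  rw [Nat.count_eq_card_filter_range] at this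
  simp only [Nat.ModEq, Nat.zero_mod] at this
  rw [show (n + 1) / 2 = n / 2 + if 0 < n % 2 then 1 else 0 by split_ifs <;> omega, ← this]
  congr!

namespace WordFlattened

variable {w : ℕ → ℕ} {m : ℕ}

lemma not_wordRunStart_add_one (hw : WordFlattened w m) {i : ℕ} (hi : i + 1 < m)
    (h : WordRunStart w i) : ¬ WordRunStart w (i + 1) := by
  intro h'
  have hhead := hw i (by omega) (i + 1) hi h h' (Nat.lt_succ_self i)
  rcases h' with h0 | hdesc
  · omega
  · simp only [Nat.add_sub_cancel] at hdesc
    omega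

lemma wordRuns_le (hw : WordFlattened w m) : wordRuns w m ≤ (m + 1) / 2 := by
  apply card_le_of_forall_add_one_notMem (filter_subset _ _)
  intro i hi hi'
  simp only [mem_filter, mem_range] at hi hi'
  exact hw.not_wordRunStart_add_one hi'.1 hi.2 hi'.2

end WordFlattened

def zigzag (n : ℕ) : Equiv.Perm (Fin n) where
  toFun i := ⟨if i.1 % 2 = 0 then i.1 / 2 else (n + 1) / 2 + i.1 / 2, by
    split_ifs <;> omega⟩
  invFun j := ⟨if j.1 < (n + 1) / 2 then 2 * j.1 else 2 * (j.1 - (n + 1) / 2) + 1, by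
    split_ifs <;> omega⟩
  left_inv i := by ext; dsimp only; split_ifs <;> omega
  right_inv j := by ext; dsimp only; split_ifs <;> omega

lemma entry_zigzag {n i : ℕ} (hi : i < n) :
    entry (zigzag n) i = if i % 2 = 0 then i / 2 else (n + 1) / 2 + i / 2 := by
  simp only [entry, hi, dif_pos, zigzag, Equiv.coe_fn_mk]

lemma wordRunStart_zigzag_iff {n i : ℕ} (hi : i < n) :
    WordRunStart (entry (zigzag n)) i ↔ i % 2 = 0 := by
  rcases Nat.eq_zero_or_pos i with rfl | hpos
  · simp [WordRunStart]
  · rw [WordRunStart, entry_zigzag hi, entry_zigzag (by omega : i - 1 < n)]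
    split_ifs <;> omega

lemma isFlattened_zigzag (n : ℕ) : IsFlattened (zigzag n) := by
  intro i hi j hj hri hrj hij
  rw [wordRunStart_zigzag_iff hi] at hri
  rw [wordRunStart_zigzag_iff hj] at hrj
  rw [entry_zigzag hi, entry_zigzag hj, if_pos hri, if_pos hrj]
  omega

lemma runCount_zigzag (n : ℕ) : runCount (zigzag n) = (n + 1) / 2 := by
  rw [runCount, wordRuns, ← card_filter_range_mod_two_eq_zero n]
  congr 1
  exact filter_congr fun i hi => wordRunStart_zigzag_iff (mem_range.mp hi)

lemma a_eq_add_one_div_two (n : ℕ) : a n = (n + 1) / 2 := by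
  apply le_antisymm
  · exact Finset.sup_le fun σ hσ => (mem_filter.mp hσ).2.wordRuns_le
  · rw [← runCount_zigzag n]
    exact le_sup (mem_filter.mpr ⟨mem_univ _, isFlattened_zigzag n⟩)

/-- The maximal number of runs satisfies `a n = a (n - 2) + 1` for every `n ≥ 2`,
with initial conditions `a 0 = 0` and `a 1 = 1`. -/
theorem a_recurrence :
    a 0 = 0 ∧ a 1 = 1 ∧ ∀ n : ℕ, 2 ≤ n → a n = a (n - 2) + 1 := by
  refine ⟨a_eq_add_one_div_two 0, a_eq_add_one_div_two 1, fun n hn => ?_⟩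
  rw [a_eq_add_one_div_two, a_eq_add_one_div_two]
  omega
end

section
/- For all integers n and k with 1 ≤ k < n, the cardinality of the set K_{n,k} equals k · f_{n−1, k}. -/
open Finset

/-- The (0-based) position of the largest letter of `σ`. -/
def delPos {n : ℕ} (σ : Equiv.Perm (Fin n)) : ℕ :=
  if h : 0 < n then (σ.symm ⟨n - 1, Nat.sub_lt h Nat.one_pos⟩ : ℕ) else 0

/-- The word on `[n-1]` obtained from `σ` by deleting its largest letter `n`. -/
def delWord {n : ℕ} (σ : Equiv.Perm (Fin n)) (i : ℕ) : ℕ :=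
  if i < delPos σ then entry σ i else entry σ (i + 1)

/-- The number of runs of the word obtained from `σ` by deleting its largest letter `n`. -/
def delRuns {n : ℕ} (σ : Equiv.Perm (Fin n)) : ℕ :=
  wordRuns (delWord σ) (n - 1)

/-- `Kset n k`: the set `K_{n,k}` of flattened partitions over `[n]` with exactly `k` runs
such that deleting the letter `n` leaves the number of runs unchanged. -/
def Kset (n k : ℕ) : Finset (Equiv.Perm (Fin n)) :=
  (flatSet n k).filter fun σ => delRuns σ = k

/-- `Lset n k`: the set `L_{n,k}` of flattened partitions over `[n]` with exactly `k` runs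
such that deleting the letter `n` reduces the number of runs by one. -/
def Lset (n k : ℕ) : Finset (Equiv.Perm (Fin n)) :=
  (flatSet n k).filter fun σ => delRuns σ = k - 1

/-! Write `n = m + 1`. Inserting the letter `n` at a gap `p` of the word of `τ ∈ S_m` is a
bijection `S_m × {0, …, m} ≃ S_n`. Since `n` exceeds both of its neighbours, the run starts of
the result are those of `τ`, shifted past `p`, except possibly for `p` and `p + 1`: the number of
runs is unchanged exactly when `n` is placed right after the last letter of a run of `τ`, and then
the run starts correspond, so the result is flattened iff `τ` is. A word with `k` runs has `k` such
gaps, whence `|K_{n,k}| = k f_{n-1,k}`. -/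

def Nat.succAbove (p i : ℕ) : ℕ := if i < p then i else i + 1

namespace Nat

lemma strictMono_succAbove (p : ℕ) : StrictMono (succAbove p) := by
  intro a b h
  unfold succAbove
  split_ifs <;> omega

lemma succAbove_self (p : ℕ) : succAbove p p = p + 1 := if_neg (lt_irrefl p)

lemma image_succAbove_range {p m : ℕ} (h : p ≤ m) :
    (range m).image (succAbove p) = (range (m + 1)).erase p := by
  ext a
  simp only [mem_image, mem_range, mem_erase]
  constructor
  · rintro ⟨i, hi, rfl⟩
    unfold succAbove
    split_ifs <;> omega
  · rintro ⟨hap, ham⟩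
    refine ⟨if a < p then a else a - 1, by split_ifs <;> omega, ?_⟩
    unfold succAbove
    split_ifs <;> omega

end Nat

lemma StrictMono.strictMonoOn_comp_iff {α β γ : Type*}
    [LinearOrder α] [Preorder β] [Preorder γ]
    {φ : α → β} (hφ : StrictMono φ) {f : β → γ} {s : Set α} :
    StrictMonoOn (f ∘ φ) s ↔ StrictMonoOn f (φ '' s) := by
  constructor
  · rintro h _ ⟨a, ha, rfl⟩ _ ⟨b, hb, rfl⟩ hab
    exact h ha hb (hφ.lt_iff_lt.1 hab)
  · intro h a ha b hb hab
    exact h ⟨a, ha, rfl⟩ ⟨b, hb, rfl⟩ (hφ hab)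

section Word

variable {w : ℕ → ℕ} {m p : ℕ}

def runStarts (w : ℕ → ℕ) (m : ℕ) : Finset ℕ :=
  (range m).filter (WordRunStart w)

lemma wordRuns_eq_card_runStarts (w : ℕ → ℕ) (m : ℕ) :
    wordRuns w m = (runStarts w m).card :=
  rfl

lemma wordFlattened_iff_strictMonoOn :
    WordFlattened w m ↔ StrictMonoOn w (runStarts w m : Set ℕ) := by
  simp only [WordFlattened, StrictMonoOn, runStarts, coe_filter, mem_range, Set.mem_ofPred_eq]
  exact ⟨fun h i hi j hj hij => h i hi.1 j hj.1 hi.2 hj.2 hij,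
    fun h i hi j hj ri rj hij => h ⟨hi, ri⟩ ⟨hj, rj⟩ hij⟩

lemma wordRunStart_succ_iff (w : ℕ → ℕ) (i : ℕ) :
    WordRunStart w (i + 1) ↔ w (i + 1) < w i := by
  simp [WordRunStart]

lemma wordRunStart_comp_succAbove {i : ℕ} (h : i ≠ p) :
    WordRunStart (w ∘ Nat.succAbove p) i ↔ WordRunStart w (Nat.succAbove p i) := by
  unfold WordRunStart Nat.succAbove
  rcases lt_or_gt_of_ne h with h | h
  · simp [h, show i - 1 < p by omega]
  · simp [show ¬ i < p by omega, show ¬ i - 1 < p by omega, show i - 1 + 1 = i by omega,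
      show i ≠ 0 by omega]

/-- Gap `p` of the length-`m` word `v` directly follows `v (p - 1)`, the last letter of a run. -/
def IsRunEnd (v : ℕ → ℕ) (m p : ℕ) : Prop :=
  1 ≤ p ∧ p ≤ m ∧ (p = m ∨ WordRunStart v p)

instance (v : ℕ → ℕ) (m p : ℕ) : Decidable (IsRunEnd v m p) :=
  inferInstanceAs (Decidable (1 ≤ p ∧ p ≤ m ∧ (p = m ∨ WordRunStart v p)))

lemma filter_isRunEnd_eq_map_swap (v : ℕ → ℕ) (m : ℕ) :
    (range (m + 1)).filter (IsRunEnd v m) = (runStarts v m).map (Equiv.swap 0 m).toEmbedding := by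
  ext p
  rw [mem_map_equiv, Equiv.symm_swap]
  simp only [mem_filter, mem_range, runStarts, IsRunEnd]
  rcases eq_or_ne p m with rfl | hpm
  · rw [Equiv.swap_apply_right]
    simp [WordRunStart]
    omega
  rcases eq_or_ne p 0 with rfl | hp0
  · simp [Equiv.swap_apply_left]
  · rw [Equiv.swap_apply_of_ne_of_ne hp0 hpm]
    constructor
    · rintro ⟨-, -, hpm', h | h⟩
      exacts [absurd h hpm, ⟨by omega, h⟩]
    · rintro ⟨h, hs⟩
      exact ⟨by omega, by omega, by omega, Or.inr hs⟩

lemma card_filter_isRunEnd (v : ℕ → ℕ) (m : ℕ) :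
    ((range (m + 1)).filter (IsRunEnd v m)).card = wordRuns v m := by
  rw [filter_isRunEnd_eq_map_swap, card_map, wordRuns_eq_card_runStarts]

/- From here on, `hmax` says that the largest letter of the length-`m + 1` word `w` sits at
position `p`, and `w ∘ Nat.succAbove p` is `w` with that letter deleted. -/

lemma image_runStarts_comp_succAbove_subset (hmax : ∀ i ≤ m, i ≠ p → w i < w p) :
    (runStarts (w ∘ Nat.succAbove p) m).image (Nat.succAbove p) ⊆ runStarts w (m + 1) := by
  intro a ha
  obtain ⟨i, hi, rfl⟩ := mem_image.1 ha
  simp only [runStarts, mem_filter, mem_range] at hi ⊢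
  refine ⟨?_, ?_⟩
  · unfold Nat.succAbove; split_ifs <;> omega
  rcases eq_or_ne i p with rfl | hip
  · rw [Nat.succAbove_self, wordRunStart_succ_iff]
    exact hmax _ (by omega) (by omega)
  · exact (wordRunStart_comp_succAbove hip).1 hi.2

lemma runStarts_subset_image_iff (hmax : ∀ i ≤ m, i ≠ p → w i < w p) (hp : p ≤ m) :
    runStarts w (m + 1) ⊆ (runStarts (w ∘ Nat.succAbove p) m).image (Nat.succAbove p) ↔
      IsRunEnd (w ∘ Nat.succAbove p) m p := by
  constructor
  · intro hsub
    have hp0 : 1 ≤ p := by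
      by_contra! hp0
      have h0 : 0 ∈ runStarts w (m + 1) := by simp [runStarts, WordRunStart]
      obtain ⟨i, -, hi⟩ := mem_image.1 (hsub h0)
      unfold Nat.succAbove at hi
      split_ifs at hi
      omega
    refine ⟨hp0, hp, or_iff_not_imp_left.2 fun hpm => ?_⟩
    have hstart : p + 1 ∈ runStarts w (m + 1) := by
      simp only [runStarts, mem_filter, mem_range, wordRunStart_succ_iff]
      exact ⟨by omega, hmax _ (by omega) (by omega)⟩
    obtain ⟨i, hi, hip⟩ := mem_image.1 (hsub hstart)
    rw [← Nat.succAbove_self, (Nat.strictMono_succAbove p).injective.eq_iff] at hip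
    exact (mem_filter.1 (hip ▸ hi)).2
  · rintro ⟨hp0, -, hend⟩ a ha
    obtain ⟨ham, hstart⟩ := mem_filter.1 ha
    have hap : a ≠ p := by
      rintro rfl
      rcases hstart with h | h
      · omega
      · exact (hmax (a - 1) (by omega) (by omega)).not_gt h
    obtain ⟨i, hi, rfl⟩ := mem_image.1 <| (Nat.image_succAbove_range hp).symm ▸
      mem_erase.2 ⟨hap, ham⟩
    refine mem_image_of_mem _ (mem_filter.2 ⟨hi, ?_⟩)
    rcases eq_or_ne i p with rfl | hip
    · exact hend.resolve_left (by rw [mem_range] at hi; omega)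
    · exact (wordRunStart_comp_succAbove hip).2 hstart

lemma runStarts_eq_image_of_isRunEnd (hmax : ∀ i ≤ m, i ≠ p → w i < w p)
    (hend : IsRunEnd (w ∘ Nat.succAbove p) m p) :
    runStarts w (m + 1) = (runStarts (w ∘ Nat.succAbove p) m).image (Nat.succAbove p) :=
  subset_antisymm ((runStarts_subset_image_iff hmax hend.2.1).2 hend)
    (image_runStarts_comp_succAbove_subset hmax)

lemma wordRuns_eq_wordRuns_comp_succAbove_iff (hmax : ∀ i ≤ m, i ≠ p → w i < w p)
    (hp : p ≤ m) :
    wordRuns w (m + 1) = wordRuns (w ∘ Nat.succAbove p) m ↔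
      IsRunEnd (w ∘ Nat.succAbove p) m p := by
  have hsub := image_runStarts_comp_succAbove_subset hmax
  rw [wordRuns_eq_card_runStarts, wordRuns_eq_card_runStarts,
    ← card_image_of_injective (runStarts (w ∘ Nat.succAbove p) m)
      (Nat.strictMono_succAbove p).injective,
    ← runStarts_subset_image_iff hmax hp]
  exact ⟨fun h => (eq_of_subset_of_card_le hsub h.le).ge,
    fun h => congrArg card (subset_antisymm h hsub)⟩

lemma wordFlattened_iff_comp_succAbove (hmax : ∀ i ≤ m, i ≠ p → w i < w p)
    (hend : IsRunEnd (w ∘ Nat.succAbove p) m p) :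
    WordFlattened w (m + 1) ↔ WordFlattened (w ∘ Nat.succAbove p) m := by
  rw [wordFlattened_iff_strictMonoOn, wordFlattened_iff_strictMonoOn,
    (Nat.strictMono_succAbove p).strictMonoOn_comp_iff, runStarts_eq_image_of_isRunEnd hmax hend,
    coe_image]

end Word

lemma Fin.val_succAbove {n : ℕ} (p : Fin (n + 1)) (j : Fin n) :
    (p.succAbove j : ℕ) = Nat.succAbove p j := by
  unfold Fin.succAbove Nat.succAbove
  split_ifs <;> simp_all [Fin.lt_def]

section Perm

variable {m : ℕ}

lemma mem_flatSet {n k : ℕ} {σ : Equiv.Perm (Fin n)} :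
    σ ∈ flatSet n k ↔ IsFlattened σ ∧ runCount σ = k := by
  simp [flatSet]

lemma mem_Kset {n k : ℕ} {σ : Equiv.Perm (Fin n)} :
    σ ∈ Kset n k ↔ σ ∈ flatSet n k ∧ delRuns σ = k :=
  mem_filter

lemma entry_lt (σ : Equiv.Perm (Fin m)) {i : ℕ} (hi : i < m) : entry σ i < m := by
  simp [entry, hi]

lemma delWord_eq_comp (σ : Equiv.Perm (Fin m)) :
    delWord σ = entry σ ∘ Nat.succAbove (delPos σ) := by
  funext i
  simp only [delWord, Function.comp_apply, Nat.succAbove]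
  split_ifs <;> rfl

/-- The permutation whose word is that of `τ` with the new largest letter `Fin.last m` inserted
at position `p`. -/
def insertMax (τ : Equiv.Perm (Fin m)) (p : Fin (m + 1)) : Equiv.Perm (Fin (m + 1)) :=
  (finSuccEquiv' p).trans ((Equiv.optionCongr τ).trans (finSuccEquiv' (Fin.last m)).symm)

lemma insertMax_apply_self (τ : Equiv.Perm (Fin m)) (p : Fin (m + 1)) :
    insertMax τ p p = Fin.last m := by
  simp [insertMax, finSuccEquiv'_at]

lemma insertMax_apply_succAbove (τ : Equiv.Perm (Fin m)) (p : Fin (m + 1)) (j : Fin m) :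
    insertMax τ p (p.succAbove j) = (τ j).castSucc := by
  simp [insertMax, finSuccEquiv'_succAbove, finSuccEquiv'_symm_some, Fin.succAbove_last]

lemma insertMax_injective :
    Function.Injective fun x : Equiv.Perm (Fin m) × Fin (m + 1) => insertMax x.1 x.2 := by
  rintro ⟨τ, p⟩ ⟨τ', p'⟩ h
  simp only at h
  obtain rfl : p = p' := (insertMax τ' p').injective <| by
    rw [insertMax_apply_self, ← h, insertMax_apply_self]
  refine Prod.ext (Equiv.ext fun j => Fin.castSucc_injective _ ?_) rfl
  rw [← insertMax_apply_succAbove, ← insertMax_apply_succAbove, h]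

lemma insertMax_bijective :
    Function.Bijective fun x : Equiv.Perm (Fin m) × Fin (m + 1) => insertMax x.1 x.2 :=
  (Fintype.bijective_iff_injective_and_card _).2
    ⟨insertMax_injective, by simp [Fintype.card_perm, Nat.factorial_succ, mul_comm]⟩

variable (τ : Equiv.Perm (Fin m)) (p : Fin (m + 1))

lemma delPos_insertMax : delPos (insertMax τ p) = p := by
  rw [delPos, dif_pos m.succ_pos]
  exact congrArg Fin.val ((Equiv.symm_apply_eq _).2 (insertMax_apply_self τ p).symm)

lemma entry_insertMax_self : entry (insertMax τ p) p = m := by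
  simp [entry, p.isLt, insertMax_apply_self]

lemma entry_insertMax_comp_succAbove : entry (insertMax τ p) ∘ Nat.succAbove p = entry τ := by
  funext j
  rcases lt_or_ge j m with hj | hj
  · rw [Function.comp_apply, ← Fin.val_succAbove p ⟨j, hj⟩]
    simp [entry, hj, (p.succAbove _).isLt, insertMax_apply_succAbove]
  · simp [entry, Nat.succAbove, show ¬ j < p by omega, show ¬ j < m by omega]

lemma delWord_insertMax : delWord (insertMax τ p) = entry τ := by
  rw [delWord_eq_comp, delPos_insertMax, entry_insertMax_comp_succAbove]

lemma entry_insertMax_lt {i : ℕ} (hi : i ≤ m) (hip : i ≠ p) :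
    entry (insertMax τ p) i < entry (insertMax τ p) p := by
  obtain ⟨j, hj, rfl⟩ := mem_image.1 <| (Nat.image_succAbove_range p.is_le).symm ▸
    mem_erase.2 ⟨hip, mem_range.2 (by omega)⟩
  rw [entry_insertMax_self, ← Function.comp_apply (f := entry _),
    entry_insertMax_comp_succAbove]
  exact entry_lt τ (mem_range.1 hj)

def runEnds (τ : Equiv.Perm (Fin m)) : Finset (Fin (m + 1)) :=
  univ.filter fun p => IsRunEnd (entry τ) m p

lemma mem_runEnds {p : Fin (m + 1)} : p ∈ runEnds τ ↔ IsRunEnd (entry τ) m p := by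
  simp [runEnds]

lemma card_runEnds : (runEnds τ).card = runCount τ := by
  rw [runEnds, card_filter,
    Fin.sum_univ_eq_sum_range (fun p => if IsRunEnd (entry τ) m p then 1 else 0), ← card_filter,
    card_filter_isRunEnd, runCount]

lemma insertMax_mem_Kset_iff {k : ℕ} :
    insertMax τ p ∈ Kset (m + 1) k ↔ τ ∈ flatSet m k ∧ p ∈ runEnds τ := by
  have hmax : ∀ i ≤ m, i ≠ p → entry (insertMax τ p) i < entry (insertMax τ p) p :=
    fun i hi hip => entry_insertMax_lt τ p hi hip
  have hruns := wordRuns_eq_wordRuns_comp_succAbove_iff hmax p.is_le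
  have hflat := wordFlattened_iff_comp_succAbove hmax
  rw [entry_insertMax_comp_succAbove] at hruns hflat
  rw [mem_Kset, mem_flatSet, mem_flatSet, mem_runEnds, IsFlattened, IsFlattened, runCount,
    runCount, delRuns, delWord_insertMax, Nat.add_sub_cancel]
  constructor
  · rintro ⟨⟨hF, hR⟩, hR'⟩
    have hend := hruns.1 (hR.trans hR'.symm)
    exact ⟨⟨(hflat hend).1 hF, hR'⟩, hend⟩
  · rintro ⟨⟨hF, hR'⟩, hend⟩
    exact ⟨⟨(hflat hend).2 hF, (hruns.2 hend).trans hR'⟩, hR'⟩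

end Perm

theorem card_Kset_general (n k : ℕ) (hkn : k < n) :
    (Kset n k).card = k * f (n - 1) k := by
  obtain ⟨m, rfl⟩ : ∃ m, n = m + 1 := ⟨n - 1, by omega⟩
  calc (Kset (m + 1) k).card = ((flatSet m k).sigma runEnds).card :=
        (card_equiv ((Equiv.sigmaEquivProd _ _).trans (Equiv.ofBijective _ insertMax_bijective))
          fun ⟨τ, p⟩ => by simp [insertMax_mem_Kset_iff]).symm
    _ = ∑ τ ∈ flatSet m k, (runEnds τ).card := card_sigma _ _
    _ = ∑ τ ∈ flatSet m k, k :=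
        sum_congr rfl fun τ hτ => (card_runEnds τ).trans (mem_flatSet.1 hτ).2
    _ = k * f (m + 1 - 1) k := by rw [sum_const, smul_eq_mul, mul_comm, f, Nat.add_sub_cancel]

/-- For all integers `n`, `k` with `1 ≤ k < n`, the cardinality of `K_{n,k}` is
`k ⬝ f_{n-1, k}`. -/
theorem card_Kset (n k : ℕ) (hk : 1 ≤ k) (hkn : k < n) :
    (Kset n k).card = k * f (n - 1) k :=
  card_Kset_general n k hkn
end

section
/- For all integers n and k with n ≥ 2 and 1 ≤ k < n: for every σ ∈ F_{n,k}, the word σ' obtained by deleting the letter n from σ is a flattened partition of [n−1] having either k runs or k−1 runs; consequently F_{n,k} is the disjoint union of K_{n,k} and L_{n,k}, i.e., K_{n,k} ∩ L_{n,k} = ∅ and F_{n,k} = K_{n,k} ∪ L_{n,k}. -/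
open Finset

section AuxLemmas

variable {n : ℕ} (σ : Equiv.Perm (Fin n))

lemma entry_lt_s8 {i : ℕ} (h : i < n) : entry σ i < n := by
  simpa [entry, h] using (σ ⟨i, h⟩).isLt

lemma delPos_lt (hn : 0 < n) : delPos σ < n := by
  simpa [delPos, hn] using (σ.symm ⟨n - 1, Nat.sub_lt hn Nat.one_pos⟩).isLt

lemma entry_delPos (hn : 0 < n) : entry σ (delPos σ) = n - 1 := by
  have h := delPos_lt σ hn
  simp only [entry, dif_pos h]
  have he : (⟨delPos σ, h⟩ : Fin n) = σ.symm ⟨n - 1, Nat.sub_lt hn Nat.one_pos⟩ := by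
    apply Fin.ext
    simp [delPos, hn]
  rw [he, Equiv.apply_symm_apply]

lemma entry_lt_of_ne (hn : 0 < n) {i : ℕ} (h : i < n) (hne : i ≠ delPos σ) :
    entry σ i < n - 1 := by
  have h1 := entry_lt_s8 σ h
  have h2 : entry σ i ≠ n - 1 := by
    intro hEq
    apply hne
    have hfe : σ ⟨i, h⟩ = ⟨n - 1, Nat.sub_lt hn Nat.one_pos⟩ := by
      apply Fin.ext
      simpa [entry, h] using hEq
    have := congrArg σ.symm hfe
    rw [Equiv.symm_apply_apply] at this
    simp [delPos, hn, ← this]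
  omega

lemma delWord_of_lt {i : ℕ} (h : i < delPos σ) : delWord σ i = entry σ i := if_pos h

lemma delWord_of_ge {i : ℕ} (h : ¬ i < delPos σ) : delWord σ i = entry σ (i + 1) := if_neg h

lemma delWord_eq (m : ℕ) :
    delWord σ m = entry σ (if m < delPos σ then m else m + 1) := by
  by_cases h : m < delPos σ <;> simp [delWord, h]

lemma runStart_of_del (hn : 2 ≤ n) {i : ℕ} (hi : i < n - 1)
    (h : WordRunStart (delWord σ) i) :
    WordRunStart (entry σ) (if i < delPos σ then i else i + 1) := by
  have hn0 : 0 < n := by omega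
  by_cases hlt : i < delPos σ
  · rw [if_pos hlt]
    rcases h with h0 | hdes
    · exact Or.inl h0
    · refine Or.inr ?_
      rwa [delWord_of_lt σ hlt, delWord_of_lt σ (by omega)] at hdes
  · rw [if_neg hlt]
    refine Or.inr ?_
    have hs : i + 1 - 1 = i := by omega
    rw [hs]
    by_cases hip : i = delPos σ
    · -- the letter after the max is smaller than the max
      have h1 : entry σ (i + 1) < n - 1 :=
        entry_lt_of_ne σ hn0 (by omega) (by omega)
      have h2 : entry σ i = n - 1 := by rw [hip]; exact entry_delPos σ hn0
      omega
    · -- i > delPos σ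
      have hgt : delPos σ < i := by omega
      have hne0 : i ≠ 0 := by omega
      rcases h with h0 | hdes
      · exact absurd h0 hne0
      · rwa [delWord_of_ge σ hlt, delWord_of_ge σ (by omega), Nat.sub_add_cancel (by omega)] at hdes

lemma delWord_flattened (hn : 2 ≤ n) (hflat : IsFlattened σ) :
    WordFlattened (delWord σ) (n - 1) := by
  intro i hi j hj hri hrj hij
  have h1 := runStart_of_del σ hn hi hri
  have h2 := runStart_of_del σ hn hj hrj
  rw [delWord_eq σ i, delWord_eq σ j]
  refine hflat _ ?_ _ ?_ h1 h2 ?_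
  · split <;> omega
  · split <;> omega
  · split <;> split <;> omega

lemma delRuns_eq_or (hn : 2 ≤ n) :
    delRuns σ = runCount σ ∨ delRuns σ = runCount σ - 1 := by
  have hn0 : 0 < n := by omega
  have hpn : delPos σ < n := delPos_lt σ hn0
  set p := delPos σ with hpdef
  set S : Finset ℕ := (Finset.range n).filter (fun i => WordRunStart (entry σ) i) with hS
  set S' : Finset ℕ := (Finset.range (n - 1)).filter (fun i => WordRunStart (delWord σ) i)
    with hS'
  have hrc : runCount σ = S.card := rfl
  have hdr : delRuns σ = S'.card := rfl
  by_cases hp : p = n - 1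
  · -- max letter at the end: run count unchanged
    left
    rw [hrc, hdr]
    have hSeq : S = S' := by
      have hr : Finset.range n = insert (n - 1) (Finset.range (n - 1)) := by
        rw [← Finset.range_add_one]
        congr 1
        omega
      rw [hS, hr, Finset.filter_insert, if_neg, hS']
      · apply Finset.filter_congr
        intro i hi
        rw [Finset.mem_range] at hi
        have h1 : delWord σ i = entry σ i := delWord_of_lt σ (by omega)
        have h2 : delWord σ (i - 1) = entry σ (i - 1) := delWord_of_lt σ (by omega)
        simp [WordRunStart, h1, h2]
      · -- n - 1 is not a run start
        rintro (h0 | hdes)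
        · omega
        · have e1 : entry σ (n - 1) = n - 1 := by
            have := entry_delPos σ hn0
            rwa [← hpdef, hp] at this
          have e2 : entry σ (n - 1 - 1) < n - 1 :=
            entry_lt_of_ne σ hn0 (by omega) (by omega)
          omega
    rw [hSeq]
  · have hplt : p < n - 1 := by omega
    set ι : ℕ → ℕ := fun i => if i < p then i else i + 1 with hι
    have hinj : Function.Injective ι := by
      intro a b hab
      simp only [hι] at hab
      split_ifs at hab <;> omega
    have hmemS' : ∀ i, i < n - 1 → WordRunStart (delWord σ) i → i ∈ S' := by
      intro i h1 h2
      rw [hS', Finset.mem_filter, Finset.mem_range]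
      exact ⟨h1, h2⟩
    have hmemS : ∀ j, j < n → WordRunStart (entry σ) j → j ∈ S := by
      intro j h1 h2
      rw [hS, Finset.mem_filter, Finset.mem_range]
      exact ⟨h1, h2⟩
    have hfwd : ∀ i ∈ S', ι i ∈ S := by
      intro i hi
      rw [hS', Finset.mem_filter, Finset.mem_range] at hi
      refine hmemS _ ?_ (runStart_of_del σ hn hi.1 hi.2)
      simp only [hι]
      split <;> omega
    have hp1S : p + 1 ∈ S := by
      refine hmemS _ (by omega) (Or.inr ?_)
      have e1 : entry σ (p + 1) < n - 1 := entry_lt_of_ne σ hn0 (by omega) (by omega)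
      have e2 : entry σ (p + 1 - 1) = n - 1 := by
        have : p + 1 - 1 = p := by omega
        rw [this]
        exact entry_delPos σ hn0
      omega
    have hback : ∀ j ∈ S, j ≠ p → j ≠ p + 1 → ∃ i ∈ S', ι i = j := by
      intro j hj hjp hjp1
      rw [hS, Finset.mem_filter, Finset.mem_range] at hj
      obtain ⟨hjn, hjr⟩ := hj
      by_cases hjlt : j < p
      · refine ⟨j, hmemS' j (by omega) ?_, by simp [hι, hjlt]⟩
        rcases hjr with h0 | hdes
        · exact Or.inl h0
        · refine Or.inr ?_
          rwa [delWord_of_lt σ hjlt, delWord_of_lt σ (by omega)]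
      · have hjgt : p + 1 < j := by omega
        refine ⟨j - 1, hmemS' (j - 1) (by omega) ?_, by
          simp only [hι]; rw [if_neg (by omega)]; omega⟩
        refine Or.inr ?_
        rcases hjr with h0 | hdes
        · omega
        · have e1 : delWord σ (j - 1) = entry σ j := by
            rw [delWord_of_ge σ (by omega)]
            congr 1
            omega
          have e2 : delWord σ (j - 1 - 1) = entry σ (j - 1) := by
            rw [delWord_of_ge σ (by omega)]
            congr 1
            omega
          rw [e1, e2]
          exact hdes
    have hpnotS : p ≠ 0 → p ∉ S := by
      intro hp0 hmem
      rw [hS, Finset.mem_filter] at hmem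
      rcases hmem.2 with h0 | hdes
      · exact hp0 h0
      · have e1 : entry σ p = n - 1 := entry_delPos σ hn0
        have e2 : entry σ (p - 1) < n - 1 := entry_lt_of_ne σ hn0 (by omega) (by omega)
        omega
    by_cases hps : WordRunStart (delWord σ) p
    · have hpS' : p ∈ S' := hmemS' p hplt hps
      by_cases hp0 : p = 0
      · -- max letter first: one run lost
        right
        have himg : S'.image ι = S.erase 0 := by
          apply Finset.ext
          intro j
          rw [Finset.mem_image, Finset.mem_erase]
          constructor
          · rintro ⟨i, hi, rfl⟩
            refine ⟨?_, hfwd i hi⟩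
            simp only [hι]
            split <;> omega
          · rintro ⟨hj0, hjS⟩
            by_cases hj1 : j = p + 1
            · exact ⟨p, hpS', by simp [hι, hj1]⟩
            · exact hback j hjS (by omega) hj1
        have h0S : 0 ∈ S := hmemS 0 (by omega) (Or.inl rfl)
        have hc : S'.card = S.card - 1 := by
          rw [← Finset.card_image_of_injective S' hinj, himg, Finset.card_erase_of_mem h0S]
        rw [hdr, hrc, hc]
      · -- run count unchanged
        left
        have himg : S'.image ι = S := by
          apply Finset.ext
          intro j
          rw [Finset.mem_image]
          constructor
          · rintro ⟨i, hi, rfl⟩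
            exact hfwd i hi
          · intro hjS
            by_cases hj1 : j = p + 1
            · exact ⟨p, hpS', by simp [hι, hj1]⟩
            · refine hback j hjS ?_ hj1
              intro hjp
              exact hpnotS hp0 (hjp ▸ hjS)
        rw [hdr, hrc, ← Finset.card_image_of_injective S' hinj, himg]
    · -- one run lost
      right
      have hp0 : p ≠ 0 := by
        intro h0
        exact hps (Or.inl h0)
      have himg : S'.image ι = S.erase (p + 1) := by
        apply Finset.ext
        intro j
        rw [Finset.mem_image, Finset.mem_erase]
        constructor
        · rintro ⟨i, hi, rfl⟩
          refine ⟨?_, hfwd i hi⟩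
          intro hcon
          have hip : i = p := by
            simp only [hι] at hcon
            split_ifs at hcon <;> omega
          rw [hS', Finset.mem_filter] at hi
          exact hps (hip ▸ hi.2)
        · rintro ⟨hj1, hjS⟩
          refine hback j hjS ?_ hj1
          intro hjp
          exact hpnotS hp0 (hjp ▸ hjS)
      have hc : S'.card = S.card - 1 := by
        rw [← Finset.card_image_of_injective S' hinj, himg, Finset.card_erase_of_mem hp1S]
      rw [hdr, hrc, hc]

end AuxLemmas

/-- For `n ≥ 2` and `1 ≤ k < n`: for every `σ ∈ F_{n,k}`, the word obtained by deleting the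
letter `n` from `σ` is a flattened partition of `[n-1]` having either `k` or `k - 1` runs;
consequently `F_{n,k}` is the disjoint union of `K_{n,k}` and `L_{n,k}`. -/
theorem flatSet_eq_Kset_disjUnion_Lset (n k : ℕ) (hn : 2 ≤ n) (hk : 1 ≤ k) (hkn : k < n) :
    (∀ σ ∈ flatSet n k,
        WordFlattened (delWord σ) (n - 1) ∧ (delRuns σ = k ∨ delRuns σ = k - 1)) ∧
    Kset n k ∩ Lset n k = ∅ ∧ flatSet n k = Kset n k ∪ Lset n k := by
  have main : ∀ σ ∈ flatSet n k,
      WordFlattened (delWord σ) (n - 1) ∧ (delRuns σ = k ∨ delRuns σ = k - 1) := by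
    intro σ hσ
    simp only [flatSet, Finset.mem_filter, Finset.mem_univ, true_and] at hσ
    obtain ⟨hf, hr⟩ := hσ
    refine ⟨delWord_flattened σ hn hf, ?_⟩
    rcases delRuns_eq_or σ hn with h | h
    · left; omega
    · right; omega
  refine ⟨main, ?_, ?_⟩
  · apply Finset.ext
    intro σ
    simp only [Kset, Lset, Finset.mem_inter, Finset.mem_filter, Finset.notMem_empty,
      iff_false]
    rintro ⟨⟨_, h1⟩, ⟨_, h2⟩⟩
    omega
  · apply Finset.ext
    intro σ
    simp only [Kset, Lset, Finset.mem_union, Finset.mem_filter]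
    constructor
    · intro hσ
      rcases (main σ hσ).2 with h | h
      · exact Or.inl ⟨hσ, h⟩
      · exact Or.inr ⟨hσ, h⟩
    · rintro (⟨h, _⟩ | ⟨h, _⟩) <;> exact h
end

section
/- Let π be a flattened partition over [n] and let a = π(i) be the first entry of some run of π. Then for every integer x with 1 ≤ x < a, the position of x in π precedes the position of a, i.e., π^{−1}(x) < π^{−1}(a). -/
open Finset

lemma exists_run_start_le (w : ℕ → ℕ) (j : ℕ) :
    ∃ k ≤ j, WordRunStart w k ∧ w k ≤ w j ∧ ∀ m ≤ j, WordRunStart w m → m ≤ k := by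
  induction j with
  | zero => exact ⟨0, le_refl 0, Or.inl rfl, le_refl _, fun m hm _ => hm⟩
  | succ j ih =>
    by_cases h : WordRunStart w (j+1)
    · exact ⟨j+1, le_refl _, h, le_refl _, fun m hm _ => hm⟩
    · obtain ⟨k, hk, hks, hkw, hmax⟩ := ih
      have hge : w j ≤ w (j+1) := by
        unfold WordRunStart at h; push_neg at h
        simpa using h.2
      refine ⟨k, hk.trans (Nat.le_succ _), hks, hkw.trans hge, fun m hm hms => ?_⟩
      rcases eq_or_lt_of_le hm with rfl | hlt
      · exact absurd hms h
      · exact hmax m (Nat.lt_succ_iff.mp hlt) hms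

/-- Let `π` be a flattened partition over `[n]` and let `a = π i` be the first entry of some
run of `π`.  Then every letter `x` smaller than `a` occurs to the left of `a`, i.e.
`π⁻¹ x < π⁻¹ a = i`. -/
theorem position_lt_of_lt_run_start (n : ℕ) (π : Equiv.Perm (Fin n)) (hπ : IsFlattened π)
    (i : Fin n) (hi : IsRunStart π (i : ℕ)) (x : Fin n) (hx : x < π i) :
    π.symm x < i := by
  by_contra hcon
  push_neg at hcon
  set j : ℕ := (π.symm x : ℕ) with hj
  have hij : (i : ℕ) ≤ j := hcon
  have hjn : j < n := (π.symm x).isLt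
  obtain ⟨k, hkj, hks, hkw, hmax⟩ := exists_run_start_le (entry π) j
  have hik : (i : ℕ) ≤ k := hmax _ hij hi.2
  have hwj : entry π j = (x : ℕ) := by
    have h2 : (⟨j, hjn⟩ : Fin n) = π.symm x := rfl
    simp [entry, hjn, h2]
  have hwi : entry π (i : ℕ) = (π i : ℕ) := by
    simp [entry, i.isLt]
  have hxlt : (x : ℕ) < (π i : ℕ) := hx
  rcases eq_or_lt_of_le hik with heq | hlt
  · have h3 : (π i : ℕ) ≤ (x : ℕ) := by rw [← hwi, ← hwj, heq]; exact hkw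
    omega
  · have hkn : k < n := lt_of_le_of_lt hkj hjn
    have h4 := hπ (i : ℕ) i.isLt k hkn hi.2 hks hlt
    rw [hwi] at h4
    have h5 : (π i : ℕ) < (x : ℕ) := by rw [← hwj]; exact lt_of_lt_of_le h4 hkw
    omega
end
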